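/- Let (A, m, Δ) be an infinitesimal bialgebra of weight λ, define a ⊳ b := Σ_{(b)} b_(1) a b_(2) (the image of Δ(b) under the linear map sending x ⊗ y to x a y), and define [a, b] := a ⊳ b − b ⊳ a. Then [·,·] is a Lie bracket on A: it is k-bilinear, alternating ([a, a] = 0 for all a ∈ A), and satisfies the Jacobi identity [[a, b], c] + [[b, c], a] + [[c, a], b] = 0 for all a, b, c ∈ A. -/

import Mathlib

/-!
Write `a ⊳ b := Σ b₁ a b₂`. Applying the weighted Leibniz rule twice gives
`a ⊳ (x b y) = x (a ⊳ b) y + x b (a ⊳ y) + (a ⊳ x) b y + λ (x a b y + x b a y)`.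
Summing over `Δ c = Σ c₁ ⊗ c₂` and using coassociativity to write both middle terms through
`Σ c⁽¹⁾ ⊗ c⁽²⁾ ⊗ c⁽³⁾`, the associator `a ⊳ (b ⊳ c) - (a ⊳ b) ⊳ c` becomes
`Σ c⁽¹⁾ b c⁽²⁾ a c⁽³⁾ + Σ c⁽¹⁾ a c⁽²⁾ b c⁽³⁾ + λ ((b a) ⊳ c + (a b) ⊳ c)`, which is symmetric in
`a` and `b`. Hence `⊳` is a left pre-Lie product, and the commutator of a left pre-Lie product
is a Lie bracket.
-/

open TensorProduct

/-- The linear map `A ⊗ A → A` sending `x ⊗ y` to `x * a * y`. -/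
noncomputable def sandwich (k : Type*) {A : Type*} [CommRing k] [NonUnitalRing A]
    [Module k A] [SMulCommClass k A A] [IsScalarTower k A A] (a : A) :
    A ⊗[k] A →ₗ[k] A :=
  (LinearMap.mul' k A).comp (LinearMap.rTensor A (LinearMap.mulRight k a))

/-- The commutator `[a, b] := a ⊳ b − b ⊳ a` of `a ⊳ b := Σ b₁ a b₂`. -/
noncomputable def ibracket (k : Type*) {A : Type*} [CommRing k] [NonUnitalRing A]
    [Module k A] [SMulCommClass k A A] [IsScalarTower k A A]
    (Δ : A →ₗ[k] A ⊗[k] A) (a b : A) : A :=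
  sandwich k a (Δ b) - sandwich k b (Δ a)

open LinearMap

section

variable {k A : Type*} [CommRing k] [NonUnitalRing A] [Module k A]
  [SMulCommClass k A A] [IsScalarTower k A A]

@[simp]
theorem sandwich_tmul (a x y : A) : sandwich k a (x ⊗ₜ[k] y) = x * a * y := by
  simp [sandwich]

theorem sandwich_zero_left : sandwich k (0 : A) = 0 :=
  TensorProduct.ext' fun x y => by simp

theorem sandwich_add_left (a b : A) : sandwich k (a + b) = sandwich k a + sandwich k b :=
  TensorProduct.ext' fun x y => by simp [mul_add, add_mul]

theorem sandwich_smul_left (r : k) (a : A) : sandwich k (r • a) = r • sandwich k a :=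
  TensorProduct.ext' fun x y => by simp [mul_smul_comm, smul_mul_assoc]

theorem sandwich_rTensor_mulLeft (a x : A) (t : A ⊗[k] A) :
    sandwich k a (rTensor A (mulLeft k x) t) = x * sandwich k a t := by
  induction t using TensorProduct.induction_on with
  | zero => simp
  | tmul y z => simp [mul_assoc]
  | add s t hs ht => simp [hs, ht, mul_add]

theorem sandwich_lTensor_mulRight (a y : A) (t : A ⊗[k] A) :
    sandwich k a (lTensor A (mulRight k y) t) = sandwich k a t * y := by
  induction t using TensorProduct.induction_on with
  | zero => simp
  | tmul x z => simp [mul_assoc]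
  | add s t hs ht => simp [hs, ht, add_mul]

variable (k) in
noncomputable def doubleSandwich (a b : A) : A ⊗[k] (A ⊗[k] A) →ₗ[k] A :=
  mul' k A ∘ₗ map (mulRight k a) (sandwich k b)

theorem doubleSandwich_tmul (a b x : A) (t : A ⊗[k] A) :
    doubleSandwich k a b (x ⊗ₜ t) = x * a * sandwich k b t := by
  simp [doubleSandwich]

theorem doubleSandwich_assoc_tmul (a b y : A) (t : A ⊗[k] A) :
    doubleSandwich k a b (TensorProduct.assoc k A A A (t ⊗ₜ y)) = sandwich k a t * b * y := by
  induction t using TensorProduct.induction_on with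
  | zero => simp
  | tmul x z => simp [doubleSandwich_tmul, mul_assoc]
  | add s t hs ht => simp [add_tmul, hs, ht, add_mul]

def IsCoassociative (Δ : A →ₗ[k] A ⊗[k] A) : Prop :=
  ∀ a : A, TensorProduct.assoc k A A A (rTensor A Δ (Δ a)) = lTensor A Δ (Δ a)

def IsWeightedLeibniz (lam : k) (Δ : A →ₗ[k] A ⊗[k] A) : Prop :=
  ∀ a b : A, Δ (a * b) =
    rTensor A (mulLeft k a) (Δ b) + lTensor A (mulRight k b) (Δ a) + lam • (a ⊗ₜ[k] b)

theorem IsWeightedLeibniz.sandwich_mul {lam : k} {Δ : A →ₗ[k] A ⊗[k] A}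
    (hΔ : IsWeightedLeibniz lam Δ) (a x y : A) :
    sandwich k a (Δ (x * y)) =
      x * sandwich k a (Δ y) + sandwich k a (Δ x) * y + lam • (x * a * y) := by
  rw [hΔ, map_add, map_add, map_smul, sandwich_rTensor_mulLeft, sandwich_lTensor_mulRight,
    sandwich_tmul]

theorem IsWeightedLeibniz.sandwich_sandwich {lam : k} {Δ : A →ₗ[k] A ⊗[k] A}
    (hΔ : IsWeightedLeibniz lam Δ) (a b : A) (t : A ⊗[k] A) :
    sandwich k a (Δ (sandwich k b t)) =
      sandwich k (sandwich k a (Δ b)) t + doubleSandwich k b a (lTensor A Δ t) +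
        doubleSandwich k a b (TensorProduct.assoc k A A A (rTensor A Δ t)) +
        lam • (sandwich k (b * a) t + sandwich k (a * b) t) := by
  induction t using TensorProduct.induction_on with
  | zero => simp
  | tmul x y =>
    simp only [sandwich_tmul, hΔ.sandwich_mul, lTensor_tmul, rTensor_tmul, doubleSandwich_tmul,
      doubleSandwich_assoc_tmul]
    simp only [add_mul, smul_mul_assoc, mul_assoc, smul_add]
    abel
  | add s t hs ht => simp only [map_add, hs, ht, smul_add]; abel

theorem sandwich_assoc_symm {lam : k} {Δ : A →ₗ[k] A ⊗[k] A} (hco : IsCoassociative Δ)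
    (hΔ : IsWeightedLeibniz lam Δ) (a b c : A) :
    sandwich k (sandwich k a (Δ b)) (Δ c) - sandwich k a (Δ (sandwich k b (Δ c))) =
      sandwich k (sandwich k b (Δ a)) (Δ c) - sandwich k b (Δ (sandwich k a (Δ c))) := by
  simp only [hΔ.sandwich_sandwich, ← hco c, smul_add]
  abel

def SandwichAlgebra (_ : A →ₗ[k] A ⊗[k] A) : Type _ := A

namespace SandwichAlgebra

variable (Δ : A →ₗ[k] A ⊗[k] A)

instance : AddCommGroup (SandwichAlgebra Δ) := inferInstanceAs (AddCommGroup A)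

instance : Module k (SandwichAlgebra Δ) := inferInstanceAs (Module k A)

noncomputable instance : NonUnitalNonAssocRing (SandwichAlgebra Δ) where
  mul a b := sandwich (A := A) k a (Δ b)
  left_distrib a b c :=
    (congrArg (sandwich (A := A) k a) (map_add Δ b c)).trans (map_add _ _ _)
  right_distrib a b c := LinearMap.congr_fun (sandwich_add_left (A := A) a b) (Δ c)
  zero_mul a := LinearMap.congr_fun (sandwich_zero_left (A := A)) (Δ a)
  mul_zero a := (congrArg (sandwich (A := A) k a) (map_zero Δ)).trans (map_zero _)

instance : IsScalarTower k (SandwichAlgebra Δ) (SandwichAlgebra Δ) where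
  smul_assoc r a b := LinearMap.congr_fun (sandwich_smul_left (A := A) r a) (Δ b)

instance : SMulCommClass k (SandwichAlgebra Δ) (SandwichAlgebra Δ) where
  smul_comm r a b :=
    ((congrArg (sandwich (A := A) k a) (map_smul Δ r b)).trans (map_smul _ _ _)).symm

variable {Δ} {lam : k}

noncomputable abbrev leftPreLieRing (hco : IsCoassociative Δ) (hΔ : IsWeightedLeibniz lam Δ) :
    LeftPreLieRing (SandwichAlgebra Δ) where
  assoc_symm' := sandwich_assoc_symm (A := A) hco hΔ

noncomputable abbrev leftPreLieAlgebra (hco : IsCoassociative Δ)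
    (hΔ : IsWeightedLeibniz lam Δ) :
    letI := leftPreLieRing hco hΔ
    LeftPreLieAlgebra k (SandwichAlgebra Δ) :=
  letI := leftPreLieRing hco hΔ
  { toModule := inferInstance, toIsScalarTower := inferInstance, toSMulCommClass := inferInstance }

end SandwichAlgebra

end

/-- In an infinitesimal bialgebra of weight `λ`, the commutator `[a, b] := a ⊳ b − b ⊳ a`
of `a ⊳ b := Σ b₁ a b₂` is a Lie bracket on `A`: it is `k`-bilinear, alternating,
and satisfies the Jacobi identity. -/
theorem infinitesimal_bialgebra_gives_lie_bracket
    {k A : Type*} [CommRing k] [NonUnitalRing A] [Module k A]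
    [SMulCommClass k A A] [IsScalarTower k A A] (lam : k)
    (Δ : A →ₗ[k] A ⊗[k] A)
    (hcoassoc : ∀ a : A,
      (TensorProduct.assoc k A A A) (LinearMap.rTensor A Δ (Δ a)) =
        LinearMap.lTensor A Δ (Δ a))
    (hcompat : ∀ a b : A,
      Δ (a * b) =
        LinearMap.rTensor A (LinearMap.mulLeft k a) (Δ b) +
        LinearMap.lTensor A (LinearMap.mulRight k b) (Δ a) +
        lam • (a ⊗ₜ[k] b)) :
    (∀ a a' b : A, ibracket k Δ (a + a') b = ibracket k Δ a b + ibracket k Δ a' b) ∧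
    (∀ (r : k) (a b : A), ibracket k Δ (r • a) b = r • ibracket k Δ a b) ∧
    (∀ a b b' : A, ibracket k Δ a (b + b') = ibracket k Δ a b + ibracket k Δ a b') ∧
    (∀ (r : k) (a b : A), ibracket k Δ a (r • b) = r • ibracket k Δ a b) ∧
    (∀ a : A, ibracket k Δ a a = 0) ∧
    (∀ a b c : A,
      ibracket k Δ (ibracket k Δ a b) c + ibracket k Δ (ibracket k Δ b c) a +
        ibracket k Δ (ibracket k Δ c a) b = 0) := by
  let := SandwichAlgebra.leftPreLieRing hcoassoc hcompat
  let := SandwichAlgebra.leftPreLieAlgebra hcoassoc hcompat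
  let L := SandwichAlgebra Δ
  have jacobi (a b c : L) : ⁅⁅a, b⁆, c⁆ + ⁅⁅b, c⁆, a⁆ + ⁅⁅c, a⁆, b⁆ = 0 := by
    rw [← lie_skew ⁅a, b⁆, ← lie_skew ⁅b, c⁆, ← lie_skew ⁅c, a⁆, ← neg_add, ← neg_add,
      lie_jacobi c a b, neg_zero]
  exact ⟨add_lie (L := L) (M := L), smul_lie (L := L) (M := L), lie_add (L := L) (M := L),
    lie_smul (L := L) (M := L), lie_self (L := L), jacobi⟩
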